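/- For all reals a, b > 0, the set {s : ℝ | s > 0 and g_{a,b}(s) = 0} has at most two elements. -/

import Mathlib

/-- The effective ionization rate `g_{a,b}(s) = a * s * exp (-b/s) - s^2/4`. -/
noncomputable def gab (a b s : ℝ) : ℝ := a * s * Real.exp (-b / s) - s ^ 2 / 4

/-! Positive zeros of `gab a b` are the solutions of `s * exp (b / s) = 4 * a`. The left-hand side
has derivative `exp (b / s) * (1 - b / s)`, so it is strictly decreasing on `(0, b]` and strictly
increasing on `[b, ∞)`; each of these two pieces meets a level set at most once. -/

open Set Real

theorem Set.InjOn.encard_sep_eq_le_one {α β : Type*} {f : α → β} {s : Set α} (hf : InjOn f s)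
    (y : β) : {x ∈ s | f x = y}.encard ≤ 1 :=
  encard_le_one_iff.2 fun _ _ hx hy => hf hx.1 hy.1 (hx.2.trans hy.2.symm)

theorem encard_sep_eq_le_two_of_strictAntiOn_of_strictMonoOn {α β : Type*} [LinearOrder α]
    [Preorder β] {f : α → β} {s : Set α} {c : α} (hanti : StrictAntiOn f (s ∩ Iic c))
    (hmono : StrictMonoOn f (s ∩ Ici c)) (y : β) : {x ∈ s | f x = y}.encard ≤ 2 := by
  have hsplit : {x ∈ s | f x = y} ⊆ {x ∈ s ∩ Iic c | f x = y} ∪ {x ∈ s ∩ Ici c | f x = y} := by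
    rintro x ⟨hx, hfx⟩
    rcases le_total x c with hxc | hcx
    exacts [Or.inl ⟨⟨hx, hxc⟩, hfx⟩, Or.inr ⟨⟨hx, hcx⟩, hfx⟩]
  calc {x ∈ s | f x = y}.encard
      ≤ {x ∈ s ∩ Iic c | f x = y}.encard + {x ∈ s ∩ Ici c | f x = y}.encard :=
        (encard_le_encard hsplit).trans (encard_union_le _ _)
    _ ≤ 1 + 1 :=
        add_le_add (hanti.injOn.encard_sep_eq_le_one y) (hmono.injOn.encard_sep_eq_le_one y)
    _ = 2 := one_add_one_eq_two

theorem hasDerivAt_mul_exp_div (b : ℝ) {s : ℝ} (hs : s ≠ 0) :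
    HasDerivAt (fun s => s * exp (b / s)) (exp (b / s) * (1 - b / s)) s := by
  have hdiv : HasDerivAt (fun s => b / s) (-(b / s ^ 2)) s := by
    simpa [div_eq_mul_inv] using (hasDerivAt_inv hs).const_mul b
  have hprod : HasDerivAt (fun s => s * exp (b / s)) _ s := (hasDerivAt_id' s).mul hdiv.exp
  convert hprod using 1
  field_simp
  ring

theorem continuousOn_mul_exp_div (b : ℝ) : ContinuousOn (fun s => s * exp (b / s)) (Ioi 0) :=
  fun _ hs => (hasDerivAt_mul_exp_div b (ne_of_gt hs)).continuousAt.continuousWithinAt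

theorem strictAntiOn_mul_exp_div (b : ℝ) :
    StrictAntiOn (fun s => s * exp (b / s)) (Ioi 0 ∩ Iic b) := by
  refine strictAntiOn_of_deriv_neg ((convex_Ioi 0).inter (convex_Iic b))
    ((continuousOn_mul_exp_div b).mono inter_subset_left) fun s hs => ?_
  rw [interior_inter, interior_Ioi, interior_Iic] at hs
  rw [(hasDerivAt_mul_exp_div b (ne_of_gt hs.1)).deriv]
  have : 1 < b / s := (one_lt_div hs.1).2 hs.2
  exact mul_neg_of_pos_of_neg (exp_pos _) (by linarith)

theorem strictMonoOn_mul_exp_div (b : ℝ) :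
    StrictMonoOn (fun s => s * exp (b / s)) (Ioi 0 ∩ Ici b) := by
  refine strictMonoOn_of_deriv_pos ((convex_Ioi 0).inter (convex_Ici b))
    ((continuousOn_mul_exp_div b).mono inter_subset_left) fun s hs => ?_
  rw [interior_inter, interior_Ioi, interior_Ici] at hs
  rw [(hasDerivAt_mul_exp_div b (ne_of_gt hs.1)).deriv]
  have : b / s < 1 := (div_lt_one hs.1).2 hs.2
  exact mul_pos (exp_pos _) (by linarith)

theorem gab_eq_zero_iff (a b : ℝ) {s : ℝ} (hs : 0 < s) :
    gab a b s = 0 ↔ s * exp (b / s) = 4 * a := by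
  rw [gab, sub_eq_zero, neg_div, exp_neg]
  constructor <;> intro h
  · field_simp at h
    linarith
  · field_simp
    linarith

theorem gab_at_most_two_positive_zeros_general (a b : ℝ) :
    {s : ℝ | 0 < s ∧ gab a b s = 0}.encard ≤ 2 := by
  have hzeros : {s : ℝ | 0 < s ∧ gab a b s = 0} = {s ∈ Ioi 0 | s * exp (b / s) = 4 * a} := by
    ext s
    exact and_congr_right fun hs => gab_eq_zero_iff a b hs
  rw [hzeros]
  exact encard_sep_eq_le_two_of_strictAntiOn_of_strictMonoOn (strictAntiOn_mul_exp_div b)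
    (strictMonoOn_mul_exp_div b) _

/-- For all `a, b > 0`, the function `g_{a,b}` has at most two positive zeros. -/
theorem gab_at_most_two_positive_zeros (a b : ℝ) (ha : 0 < a) (hb : 0 < b) :
    {s : ℝ | 0 < s ∧ gab a b s = 0}.encard ≤ 2 :=
  gab_at_most_two_positive_zeros_general a b
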